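/- Let p be such that 0 < D(1/2∥p) < 1 and set the group size N_l = log N. Then the probability that in all L = N/log N groups at most half the users drop out tends to 0 as N → ∞. -/

import Mathlib

/-- KL divergence between Bernoulli(a) and Bernoulli(b). -/
noncomputable def klBern (a b : ℝ) : ℝ :=
  a * Real.log (a / b) + (1 - a) * Real.log ((1 - a) / (1 - b))

/-- Upper-tail probability `P[X ≥ k]` of a Binomial(n, p) random variable. -/
noncomputable def binomTail (n k : ℕ) (p : ℝ) : ℝ :=
  ∑ j ∈ Finset.Icc k n, (n.choose j : ℝ) * p ^ j * (1 - p) ^ (n - j)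

/-!
A group of size `n` fails (more than half of its users drop) with probability `q` at least the
single binomial term at `n/2 + 1`, which by `2ⁿ ≤ 2(n+1)·C(n, n/2+1)` and the Bhattacharyya
identity `2√(p(1-p)) = exp(-D(1/2‖p))` is of order `exp(-D n)/n`. With `n = ⌈log N⌉` this is
`≳ N^{-D}/log N`, and there are `L ≈ N/log N` groups, so `L q ≳ N^{1-D}/log² N → ∞` because
`D < 1`; since `(1 - q)^L ≤ exp(-L q)`, the probability that no group fails tends to `0`.
-/

open Real Filter Topology Finset

lemma tendsto_one_sub_pow_of_tendsto_mul_atTop {ι : Type*} {l : Filter ι} {q : ι → ℝ}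
    {L : ι → ℕ} (hq : ∀ i, q i ≤ 1) (h : Tendsto (fun i => (L i : ℝ) * q i) l atTop) :
    Tendsto (fun i => (1 - q i) ^ L i) l (𝓝 0) := by
  refine squeeze_zero (fun i => pow_nonneg (sub_nonneg.2 (hq i)) _) (fun i => ?_)
    (tendsto_exp_neg_atTop_nhds_zero.comp h)
  calc (1 - q i) ^ L i ≤ exp (-q i) ^ L i :=
        pow_le_pow_left₀ (sub_nonneg.2 (hq i)) (one_sub_le_exp_neg _) _
    _ = exp (-((L i : ℝ) * q i)) := by rw [← exp_nat_mul]; ring_nf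

namespace Nat

lemma two_pow_le_succ_mul_choose_half (n : ℕ) : 2 ^ n ≤ (n + 1) * n.choose (n / 2) :=
  calc 2 ^ n = ∑ j ∈ range (n + 1), n.choose j := (sum_range_choose n).symm
    _ ≤ ∑ _j ∈ range (n + 1), n.choose (n / 2) := sum_le_sum fun j _ => choose_le_middle j n
    _ = (n + 1) * n.choose (n / 2) := by simp

lemma choose_half_le_two_mul_choose_half_succ {n : ℕ} (hn : 1 ≤ n) :
    n.choose (n / 2) ≤ 2 * n.choose (n / 2 + 1) := by
  refine le_of_mul_le_mul_right (a := n - n / 2) ?_ (by omega)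
  calc n.choose (n / 2) * (n - n / 2) = n.choose (n / 2 + 1) * (n / 2 + 1) :=
        (choose_succ_right_eq n (n / 2)).symm
    _ ≤ n.choose (n / 2 + 1) * (2 * (n - n / 2)) := mul_le_mul_left _ (by omega)
    _ = 2 * n.choose (n / 2 + 1) * (n - n / 2) := by ring

lemma two_pow_le_two_mul_succ_mul_choose_half_succ {n : ℕ} (hn : 1 ≤ n) :
    2 ^ n ≤ 2 * (n + 1) * n.choose (n / 2 + 1) :=
  calc 2 ^ n ≤ (n + 1) * n.choose (n / 2) := two_pow_le_succ_mul_choose_half n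
    _ ≤ (n + 1) * (2 * n.choose (n / 2 + 1)) :=
        mul_le_mul_left _ (choose_half_le_two_mul_choose_half_succ hn)
    _ = 2 * (n + 1) * n.choose (n / 2 + 1) := by ring

end Nat

section Binomial

variable {p : ℝ}

lemma exp_neg_klBern_half (hp0 : 0 < p) (hp1 : p < 1) :
    exp (-klBern (1 / 2) p) = 2 * √(p * (1 - p)) := by
  have h1p : 0 < 1 - p := by linarith
  rw [← exp_log (by positivity : 0 < 2 * √(p * (1 - p)))]
  congr 1
  rw [klBern, log_mul two_ne_zero (by positivity), log_sqrt (by positivity),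
    log_mul hp0.ne' h1p.ne', log_div (by norm_num) hp0.ne', log_div (by norm_num) h1p.ne',
    show (1 : ℝ) - 1 / 2 = 1 / 2 by norm_num, one_div, log_inv]
  ring

lemma binomTail_le_one (hp0 : 0 ≤ p) (hp1 : p ≤ 1) (n k : ℕ) : binomTail n k p ≤ 1 := by
  have h1p : 0 ≤ 1 - p := by linarith
  calc binomTail n k p ≤ ∑ j ∈ range (n + 1), (n.choose j : ℝ) * p ^ j * (1 - p) ^ (n - j) :=
        sum_le_sum_of_subset_of_nonneg
          (fun j hj => by simp only [mem_Icc, mem_range] at hj ⊢; omega)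
          fun j _ _ => by positivity
    _ = (p + (1 - p)) ^ n := by rw [add_pow]; exact sum_congr rfl fun j _ => by ring
    _ = 1 := by simp

lemma choose_mul_pow_le_binomTail (hp0 : 0 ≤ p) (hp1 : p ≤ 1) {n k : ℕ} (hk : k ≤ n) :
    (n.choose k : ℝ) * p ^ k * (1 - p) ^ (n - k) ≤ binomTail n k p := by
  have h1p : 0 ≤ 1 - p := by linarith
  exact single_le_sum (f := fun j => (n.choose j : ℝ) * p ^ j * (1 - p) ^ (n - j))
    (fun j _ => by positivity) (by simp [hk])

lemma le_binomTail_half_succ (hp0 : 0 < p) (hp : p ≤ 1 / 2) {n : ℕ} (hn : 1 ≤ n) :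
    p / (1 - p) * (2 * √(p * (1 - p))) ^ n / (2 * (n + 1)) ≤ binomTail n (n / 2 + 1) p := by
  have h1p : 0 < 1 - p := by linarith
  set k := n / 2 + 1
  set t := p / (1 - p)
  set s := √t
  have hs1 : s ≤ 1 := sqrt_le_one.2 ((div_le_one h1p).2 (by linarith))
  have hst : s ^ 2 = t := sq_sqrt (by positivity)
  have hsqrt : √(p * (1 - p)) = s * (1 - p) := by
    have hpt : p * (1 - p) = t * ((1 - p) * (1 - p)) := by simp only [t]; field_simp
    rw [hpt, sqrt_mul (by positivity), sqrt_mul_self h1p.le]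
  have hterm : p ^ k * (1 - p) ^ (n - k) = (1 - p) ^ n * s ^ (2 * k) := by
    rw [pow_mul, hst, div_pow, ← pow_sub_mul_pow (1 - p) (show k ≤ n by omega)]
    field_simp
  have hchoose : (2 : ℝ) ^ n / (2 * (n + 1)) ≤ n.choose k := by
    rw [div_le_iff₀ (by positivity)]
    exact_mod_cast (Nat.two_pow_le_two_mul_succ_mul_choose_half_succ hn).trans_eq (by ring)
  calc t * (2 * √(p * (1 - p))) ^ n / (2 * (n + 1))
      = 2 ^ n / (2 * (n + 1)) * ((1 - p) ^ n * s ^ (n + 2)) := by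
        rw [hsqrt, pow_add, hst, mul_pow, mul_pow]; ring
    _ ≤ n.choose k * ((1 - p) ^ n * s ^ (2 * k)) := by
        have := pow_le_pow_of_le_one (sqrt_nonneg t) hs1 (show 2 * k ≤ n + 2 by omega)
        gcongr
    _ = n.choose k * p ^ k * (1 - p) ^ (n - k) := by rw [mul_assoc, hterm]
    _ ≤ binomTail n k p := choose_mul_pow_le_binomTail hp0.le (by linarith) (by omega)

end Binomial

lemma eventually_ceil_log_add_one_le_rpow {b : ℝ} (hb : 0 < b) :
    ∀ᶠ N : ℕ in atTop, (⌈log N⌉₊ : ℝ) + 1 ≤ (N : ℝ) ^ b := by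
  have hlog : ∀ᶠ x : ℝ in atTop, log x ≤ 1 / 2 * x ^ b := by
    filter_upwards [(isLittleO_log_rpow_atTop hb).bound one_half_pos, eventually_ge_atTop 1]
      with x hx hx1
    rwa [norm_of_nonneg (log_nonneg hx1), norm_of_nonneg (by positivity)] at hx
  have hfour : ∀ᶠ x : ℝ in atTop, 4 ≤ x ^ b := (tendsto_rpow_atTop hb).eventually_ge_atTop 4
  filter_upwards [tendsto_natCast_atTop_atTop.eventually (hlog.and hfour), eventually_ge_atTop 1]
    with N ⟨hlogN, hfourN⟩ hN
  have := Nat.ceil_lt_add_one (log_nonneg (by exact_mod_cast hN : (1 : ℝ) ≤ N))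
  linarith

lemma tendsto_div_ceil_log_mul_exp_pow_atTop {c : ℝ} (hc0 : 0 ≤ c) (hc1 : c < 1) :
    Tendsto (fun N : ℕ =>
      ((N / ⌈log N⌉₊ : ℕ) : ℝ) * (exp (-c) ^ ⌈log N⌉₊ / (⌈log N⌉₊ + 1))) atTop atTop := by
  -- `b` is chosen so that `N ^ (1 - b) · N ^ (-c) · N ^ (-b) = N ^ ((1 - c) / 2)` still grows.
  set b := (1 - c) / 4
  have hb : 0 < b := by simp only [b]; linarith
  have hlow : Tendsto (fun N : ℕ => exp (-c) / 2 * (N : ℝ) ^ ((1 - c) / 2)) atTop atTop :=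
    ((tendsto_rpow_atTop (by linarith)).comp tendsto_natCast_atTop_atTop).const_mul_atTop
      (by positivity)
  refine tendsto_atTop_mono' _ ?_ hlow
  filter_upwards [eventually_ceil_log_add_one_le_rpow hb, eventually_ge_atTop 2,
    ((tendsto_rpow_atTop (by simp only [b]; linarith : 0 < 1 - b)).comp
      tendsto_natCast_atTop_atTop).eventually_ge_atTop 2] with N hnb hN hN2
  set n := ⌈log N⌉₊
  have hN0 : (0 : ℝ) < N := by positivity
  have hlogN : 0 < log N := log_pos (by exact_mod_cast hN)
  have hn0 : (0 : ℝ) < n := by exact_mod_cast Nat.ceil_pos.2 hlogN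
  have hL : (N : ℝ) ^ (1 - b) / 2 ≤ (N / n : ℕ) := by
    have h1 : (N : ℝ) / n - 1 < (N / n : ℕ) := by
      rw [← Nat.floor_div_eq_div (K := ℝ)]; exact Nat.sub_one_lt_floor _
    have h2 : (N : ℝ) ^ (1 - b) ≤ N / n := by
      rw [rpow_sub hN0, rpow_one]
      gcongr
      linarith
    simp only [Function.comp_apply] at hN2
    linarith
  have hexp : exp (-c) * (N : ℝ) ^ (-c) ≤ exp (-c) ^ n := by
    rw [rpow_def_of_pos hN0, ← exp_add, ← exp_nat_mul, exp_le_exp]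
    nlinarith [Nat.ceil_lt_add_one hlogN.le]
  have hinv : (N : ℝ) ^ (-b) ≤ 1 / (n + 1) := by
    rw [rpow_neg hN0.le, one_div]
    gcongr
  calc exp (-c) / 2 * (N : ℝ) ^ ((1 - c) / 2)
      = (N : ℝ) ^ (1 - b) / 2 * (exp (-c) * (N : ℝ) ^ (-c) * (N : ℝ) ^ (-b)) := by
        have : (N : ℝ) ^ (1 - b) * ((N : ℝ) ^ (-c) * (N : ℝ) ^ (-b)) = N ^ ((1 - c) / 2) := by
          rw [← rpow_add hN0, ← rpow_add hN0]
          congr 1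
          ring
        rw [← this]
        ring
    _ ≤ (N / n : ℕ) * (exp (-c) ^ n / (n + 1)) := by
        rw [div_eq_mul_one_div _ ((n : ℝ) + 1)]
        gcongr

/-- Converse: let `p < 1/2` be such that `0 < D(1/2 ∥ p) < 1` and set the group size
`N_l = log N`.  Then the probability that in all `L = N / log N` groups at most half of
the users drop out, namely `(1 − P[D ≥ ⌊N_l/2⌋+1])^{N/N_l}` with `D ~ Binomial(N_l, p)`
independent across groups, tends to `0` as `N → ∞`. -/
theorem stmt6 (p : ℝ) (hp0 : 0 < p) (hp : p < 1 / 2)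
    (hc0 : 0 < klBern (1 / 2) p) (hc1 : klBern (1 / 2) p < 1) :
    Filter.Tendsto
      (fun N : ℕ =>
        (1 - binomTail (⌈Real.log N⌉₊) (⌈Real.log N⌉₊ / 2 + 1) p) ^ (N / ⌈Real.log N⌉₊))
      Filter.atTop (nhds 0) := by
  have hp1 : p < 1 := by linarith
  have h1p : 0 < 1 - p := by linarith
  refine tendsto_one_sub_pow_of_tendsto_mul_atTop (fun N => binomTail_le_one hp0.le hp1.le _ _) ?_
  refine tendsto_atTop_mono' _ ?_
    ((tendsto_div_ceil_log_mul_exp_pow_atTop hc0.le hc1).const_mul_atTop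
      (by positivity : 0 < p / (1 - p) / 2))
  filter_upwards [eventually_ge_atTop 2] with N hN
  set n := ⌈log N⌉₊
  have hn : 1 ≤ n := Nat.ceil_pos.2 (log_pos (by exact_mod_cast hN))
  have hq := le_binomTail_half_succ hp0 hp.le hn
  rw [← exp_neg_klBern_half hp0 hp1] at hq
  calc p / (1 - p) / 2 * ((N / n : ℕ) * (exp (-klBern (1 / 2) p) ^ n / (n + 1)))
      = (N / n : ℕ) * (p / (1 - p) * exp (-klBern (1 / 2) p) ^ n / (2 * (n + 1))) := by field_simp
    _ ≤ (N / n : ℕ) * binomTail n (n / 2 + 1) p := by gcongr
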